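/- Let h be the horizontal line y = 0, let L be a finite family of L-shapes all of whose points have positive y-coordinate, and let S be a finite family of vertical segments of the form {x} × [0,b] with b > 0, such that: the horizontal segments of the L-shapes in L have pairwise distinct y-coordinates; the vertical segments of the L-shapes in L together with the segments of S have pairwise distinct x-coordinates; every L-shape in L intersects at least one segment of S; and the family L ∪ S is triangle-free. Assume moreover: (1) no two handles of L-shapes in L intersect; (2) for every ℓ ∈ L the x-coordinate of the right endpoint of ℓ equals the x-coordinate of its rightmost support, and whenever the vertical segment of ℓ₂ ∈ L intersects the horizontal segment of ℓ₁ ∈ L, the right endpoint of ℓ₁ has strictly larger x-coordinate than the right endpoint of ℓ₂; (3) no corner, right endpoint, or top endpoint of an L-shape in L lies below the handle of an L-shape in L; (4) there is no corner of an L-shape in L lying to the left of two intersecting members of L ∪ S; (5) for all ℓ ∈ L and m ∈ L ∪ S with ℓ ∩ m ≠ ∅, the vertical segment of ℓ does not lie entirely to the left of m. Then for all ℓ₁, ℓ₂, ℓ ∈ L such that ℓ₁ and ℓ₂ are in configuration (e) or (f) — meaning their corners (x₁,y₁), (x₂,y₂), right endpoints' x-coordinates r₁, r₂, and top endpoints'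 y-coordinates t₁, t₂ satisfy x₁ < x₂ < r₁, y₁ < y₂ < t₁, and t₁ < t₂ — if the corner of ℓ₁ lies below the horizontal segment of ℓ, then the corner of ℓ₂ also lies below the horizontal segment of ℓ. -/

import Mathlib

open Set

/-- An L-shape, given by its corner `(x, y)`, right endpoint `(r, y)`,
and top endpoint `(x, t)`, with `x < r` and `y < t`. -/
structure LS where
  x : ℝ
  y : ℝ
  r : ℝ
  t : ℝ
  hxr : x < r
  hyt : y < t

/-- The horizontal segment of an L-shape. -/
def LS.hSeg (ℓ : LS) : Set (ℝ × ℝ) := Icc ℓ.x ℓ.r ×ˢ ({ℓ.y} : Set ℝ)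

/-- The vertical segment of an L-shape. -/
def LS.vSeg (ℓ : LS) : Set (ℝ × ℝ) := ({ℓ.x} : Set ℝ) ×ˢ Icc ℓ.y ℓ.t

/-- The L-shape as a subset of the plane. -/
def LS.set (ℓ : LS) : Set (ℝ × ℝ) := ℓ.hSeg ∪ ℓ.vSeg

/-- The intersection graph of a finite family of sets in the plane (each element `a` of the
index family represents the set `toSet a`): two vertices are adjacent exactly when they
represent distinct sets that intersect. -/
def iGraph {α : Type} (F : Finset α) (toSet : α → Set (ℝ × ℝ)) :
    SimpleGraph {a // a ∈ F} where
  Adj a b := toSet a.1 ≠ toSet b.1 ∧ (toSet a.1 ∩ toSet b.1).Nonempty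
  symm := by
    constructor; intro a b h
    exact ⟨h.1.symm, by rw [Set.inter_comm]; exact h.2⟩
  loopless := by constructor; intro a h; exact h.1 rfl

/-- A subset of the plane is an L-shape. -/
def IsLShape (A : Set (ℝ × ℝ)) : Prop := ∃ ℓ : LS, A = ℓ.set

/-- A vertical segment `{x} × [0, b]` with `b > 0`, grounded on the line `y = 0`. -/
structure VSeg where
  x : ℝ
  b : ℝ
  hb : 0 < b

/-- The vertical segment as a subset of the plane. -/
def VSeg.set (s : VSeg) : Set (ℝ × ℝ) := ({s.x} : Set ℝ) ×ˢ Icc (0 : ℝ) s.b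

/-- `m` is a member of the family `L ∪ S`. -/
def InFam (L : Finset LS) (S : Finset VSeg) (m : Set (ℝ × ℝ)) : Prop :=
  (∃ ℓ ∈ L, m = ℓ.set) ∨ (∃ s ∈ S, m = s.set)

/-- The family `L ∪ S` is triangle-free: it has no three pairwise intersecting
distinct members. -/
def TriangleFreeFam (L : Finset LS) (S : Finset VSeg) : Prop :=
  ¬ ∃ m₁ m₂ m₃ : Set (ℝ × ℝ), InFam L S m₁ ∧ InFam L S m₂ ∧ InFam L S m₃ ∧
      m₁ ≠ m₂ ∧ m₁ ≠ m₃ ∧ m₂ ≠ m₃ ∧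
      (m₁ ∩ m₂).Nonempty ∧ (m₁ ∩ m₃).Nonempty ∧ (m₂ ∩ m₃).Nonempty

/-- The `x`-coordinate of the leftmost segment of `S` intersecting `ℓ`
(the leftmost support of `ℓ`). -/
noncomputable def leftSupX (S : Finset VSeg) (ℓ : LS) : ℝ :=
  sInf (VSeg.x '' {s : VSeg | s ∈ S ∧ (ℓ.set ∩ s.set).Nonempty})

/-- The `x`-coordinate of the rightmost segment of `S` intersecting `ℓ`
(the rightmost support of `ℓ`). -/
noncomputable def rightSupX (S : Finset VSeg) (ℓ : LS) : ℝ :=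
  sSup (VSeg.x '' {s : VSeg | s ∈ S ∧ (ℓ.set ∩ s.set).Nonempty})

/-- The handle of `ℓ`: the points of `ℓ` strictly to the left of its leftmost support. -/
noncomputable def handle (S : Finset VSeg) (ℓ : LS) : Set (ℝ × ℝ) :=
  {p ∈ ℓ.set | p.1 < leftSupX S ℓ}

/-- The hook of `ℓ`: the points of `ℓ` strictly to the right of its rightmost support. -/
noncomputable def hook (S : Finset VSeg) (ℓ : LS) : Set (ℝ × ℝ) :=
  {p ∈ ℓ.set | rightSupX S ℓ < p.1}

/-- `p` lies below `s`: `p ∉ s` and the upward vertical ray from `p` meets `s`. -/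
def PBelow (p : ℝ × ℝ) (s : Set (ℝ × ℝ)) : Prop :=
  p ∉ s ∧ ∃ q ∈ s, q.1 = p.1 ∧ p.2 ≤ q.2

/-- `p` lies to the left of `s`: `p ∉ s` and the rightward horizontal ray
from `p` meets `s`. -/
def PLeft (p : ℝ × ℝ) (s : Set (ℝ × ℝ)) : Prop :=
  p ∉ s ∧ ∃ q ∈ s, q.2 = p.2 ∧ p.1 ≤ q.1

/-- The set `r` lies to the left of `s`: every point of `r` lies to the left of `s`. -/
def SetLeft (r s : Set (ℝ × ℝ)) : Prop := ∀ p ∈ r, PLeft p s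

/-!
Let the corner of `ℓ₁` lie below `ℓ.hSeg`. If `ℓ.hSeg` crosses the vertical segment of `ℓ₁`,
then `ℓ₁.r < ℓ.r` by Condition 2, and if `ℓ₂` had its corner at or above `ℓ.hSeg`, every support
of `ℓ₂` left of `ℓ₁.r` would form a triangle with `ℓ` and `ℓ₁`; so `ℓ₂` is supported only to the
right of `ℓ₁.r`, and the right endpoint of `ℓ₁` lies below the handle of `ℓ₂`, against
Condition 3. If instead `ℓ.hSeg` passes above the top of `ℓ₁` and ended left of the corner of
`ℓ₂`, the rightmost support of `ℓ` (at `ℓ.r`, by Condition 2) would meet `ℓ₁` and have the whole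
vertical segment of `ℓ₁` to its left, against Condition 5.
-/

namespace LS

@[simp]
lemma mem_hSeg_iff {ℓ : LS} {a b : ℝ} : (a, b) ∈ ℓ.hSeg ↔ (ℓ.x ≤ a ∧ a ≤ ℓ.r) ∧ b = ℓ.y := by
  simp [hSeg]

@[simp]
lemma mem_vSeg_iff {ℓ : LS} {a b : ℝ} : (a, b) ∈ ℓ.vSeg ↔ a = ℓ.x ∧ ℓ.y ≤ b ∧ b ≤ ℓ.t := by
  simp [vSeg]

lemma corner_mem_set (ℓ : LS) : (ℓ.x, ℓ.y) ∈ ℓ.set :=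
  Or.inl (mem_hSeg_iff.2 ⟨⟨le_rfl, ℓ.hxr.le⟩, rfl⟩)

lemma y_le_of_mem_set {ℓ : LS} {p : ℝ × ℝ} (hp : p ∈ ℓ.set) : ℓ.y ≤ p.2 := by
  rcases hp with ⟨-, hp⟩ | ⟨-, hp⟩
  · exact (mem_singleton_iff.1 hp).ge
  · exact hp.1

lemma pBelow_hSeg_iff {ℓ : LS} {a b : ℝ} :
    PBelow (a, b) ℓ.hSeg ↔ ℓ.x ≤ a ∧ a ≤ ℓ.r ∧ b < ℓ.y := by
  constructor
  · rintro ⟨hnot, ⟨c, d⟩, hq, rfl, hbd⟩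
    rw [mem_hSeg_iff] at hq hnot
    obtain ⟨hc, rfl⟩ := hq
    exact ⟨hc.1, hc.2, lt_of_le_of_ne hbd fun h => hnot ⟨hc, h⟩⟩
  · rintro ⟨hxa, har, hb⟩
    refine ⟨fun h => hb.ne (mem_hSeg_iff.1 h).2, (a, ℓ.y), ?_, rfl, hb.le⟩
    exact mem_hSeg_iff.2 ⟨⟨hxa, har⟩, rfl⟩

end LS

namespace VSeg

@[simp]
lemma mem_set_iff {s : VSeg} {a b : ℝ} : (a, b) ∈ s.set ↔ a = s.x ∧ 0 ≤ b ∧ b ≤ s.b := by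
  simp [VSeg.set]

lemma mem_inter_of_crosses_hSeg {s : VSeg} {ℓ : LS} (hx : ℓ.x ≤ s.x) (hr : s.x ≤ ℓ.r)
    (hy : 0 ≤ ℓ.y) (hb : ℓ.y ≤ s.b) : (s.x, ℓ.y) ∈ ℓ.set ∩ s.set :=
  ⟨Or.inl (LS.mem_hSeg_iff.2 ⟨⟨hx, hr⟩, rfl⟩), mem_set_iff.2 ⟨rfl, hy, hb⟩⟩

lemma bounds_of_inter_nonempty {s : VSeg} {ℓ : LS} (h : (ℓ.set ∩ s.set).Nonempty) :
    ℓ.x ≤ s.x ∧ s.x ≤ ℓ.r ∧ ℓ.y ≤ s.b := by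
  obtain ⟨⟨a, b⟩, hp | hp, hs⟩ := h <;>
    simp only [LS.mem_hSeg_iff, LS.mem_vSeg_iff, mem_set_iff] at hp hs
  · exact ⟨hs.1 ▸ hp.1.1, hs.1 ▸ hp.1.2, hp.2 ▸ hs.2.2⟩
  · exact ⟨(hs.1.symm.trans hp.1).ge, hs.1.symm.trans hp.1 ▸ ℓ.hxr.le, hp.2.1.trans hs.2.2⟩

lemma setLeft_vSeg {s : VSeg} {ℓ : LS} (hx : ℓ.x < s.x) (hy : 0 ≤ ℓ.y) (ht : ℓ.t ≤ s.b) :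
    SetLeft ℓ.vSeg s.set := by
  rintro ⟨a, b⟩ hp
  rw [LS.mem_vSeg_iff] at hp
  refine ⟨fun h => hx.ne ?_, (s.x, b), mem_set_iff.2 ⟨rfl, ?_, ?_⟩, rfl, ?_⟩
  · rw [← hp.1]; exact (mem_set_iff.1 h).1
  · linarith
  · linarith
  · exact hp.1 ▸ hx.le

end VSeg

lemma LS.set_ne_vSeg_set {ℓ : LS} (hpos : ∀ p ∈ ℓ.set, 0 < p.2) (s : VSeg) : ℓ.set ≠ s.set := by
  intro h
  have : (s.x, (0 : ℝ)) ∈ ℓ.set := h ▸ VSeg.mem_set_iff.2 ⟨rfl, le_rfl, s.hb.le⟩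
  exact lt_irrefl _ (hpos _ this)

section Supports

variable {S : Finset VSeg} {ℓ : LS}

lemma finite_supportXs (S : Finset VSeg) (ℓ : LS) :
    (VSeg.x '' {s | s ∈ S ∧ (ℓ.set ∩ s.set).Nonempty}).Finite :=
  (S.finite_toSet.subset fun _ h => h.1).image _

lemma supportXs_nonempty (h : ∃ s ∈ S, (ℓ.set ∩ s.set).Nonempty) :
    (VSeg.x '' {s | s ∈ S ∧ (ℓ.set ∩ s.set).Nonempty}).Nonempty :=
  let ⟨s, hs, hs'⟩ := h
  ⟨s.x, s, ⟨hs, hs'⟩, rfl⟩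

lemma exists_support_x_eq_leftSupX (h : ∃ s ∈ S, (ℓ.set ∩ s.set).Nonempty) :
    ∃ s ∈ S, (ℓ.set ∩ s.set).Nonempty ∧ s.x = leftSupX S ℓ :=
  let ⟨s, ⟨hs, hs'⟩, hx⟩ := (supportXs_nonempty h).csInf_mem (finite_supportXs S ℓ)
  ⟨s, hs, hs', hx⟩

lemma exists_support_x_eq_rightSupX (h : ∃ s ∈ S, (ℓ.set ∩ s.set).Nonempty) :
    ∃ s ∈ S, (ℓ.set ∩ s.set).Nonempty ∧ s.x = rightSupX S ℓ :=
  let ⟨s, ⟨hs, hs'⟩, hx⟩ := (supportXs_nonempty h).csSup_mem (finite_supportXs S ℓ)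
  ⟨s, hs, hs', hx⟩

lemma pBelow_handle {a b : ℝ} (hx : ℓ.x ≤ a) (hr : a ≤ ℓ.r) (hsup : a < leftSupX S ℓ)
    (hb : b < ℓ.y) : PBelow (a, b) (handle S ℓ) := by
  refine ⟨fun h => hb.not_ge (LS.y_le_of_mem_set h.1), (a, ℓ.y), ⟨?_, hsup⟩, rfl, hb.le⟩
  exact Or.inl (LS.mem_hSeg_iff.2 ⟨⟨hx, hr⟩, rfl⟩)

end Supports

lemma TriangleFreeFam.not_inter_of_inter {L : Finset LS} {S : Finset VSeg}
    (htf : TriangleFreeFam L S) (hpos : ∀ ℓ ∈ L, ∀ p ∈ ℓ.set, 0 < p.2) {ℓ ℓ' : LS} {s : VSeg}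
    (hℓ : ℓ ∈ L) (hℓ' : ℓ' ∈ L) (hs : s ∈ S) (hne : ℓ.set ≠ ℓ'.set)
    (hℓℓ' : (ℓ.set ∩ ℓ'.set).Nonempty) (hℓs : (ℓ.set ∩ s.set).Nonempty) :
    ¬(ℓ'.set ∩ s.set).Nonempty := fun hℓ's =>
  htf ⟨ℓ.set, ℓ'.set, s.set, Or.inl ⟨ℓ, hℓ, rfl⟩, Or.inl ⟨ℓ', hℓ', rfl⟩, Or.inr ⟨s, hs, rfl⟩,
    hne, LS.set_ne_vSeg_set (hpos ℓ hℓ) s, LS.set_ne_vSeg_set (hpos ℓ' hℓ') s, hℓℓ', hℓs, hℓ's⟩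

section Configuration

variable {L : Finset LS} {S : Finset VSeg} {ℓ ℓ₁ ℓ₂ : LS}

lemma y_lt_of_hSeg_crosses_vSeg (htf : TriangleFreeFam L S)
    (hpos : ∀ ℓ ∈ L, ∀ p ∈ ℓ.set, 0 < p.2) (hℓ : ℓ ∈ L) (hℓ₁ : ℓ₁ ∈ L)
    (hsup₂ : ∃ s ∈ S, (ℓ₂.set ∩ s.set).Nonempty) (hr₂ : ℓ₂.r = rightSupX S ℓ₂)
    (hbelow : ¬PBelow (ℓ₁.r, ℓ₁.y) (handle S ℓ₂))
    (hx : ℓ.x ≤ ℓ₁.x) (hr : ℓ₁.r < ℓ.r) (hy : ℓ₁.y < ℓ.y) (ht : ℓ.y ≤ ℓ₁.t)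
    (hx₁₂ : ℓ₁.x < ℓ₂.x) (hx₂ : ℓ₂.x < ℓ₁.r) (hy₁₂ : ℓ₁.y < ℓ₂.y) : ℓ₂.y < ℓ.y := by
  by_contra! hy₂
  have hy₁ : 0 < ℓ₁.y := hpos ℓ₁ hℓ₁ _ ℓ₁.corner_mem_set
  have hne : ℓ.set ≠ ℓ₁.set := fun he =>
    hy.not_ge (LS.y_le_of_mem_set (he ▸ ℓ₁.corner_mem_set : (ℓ₁.x, ℓ₁.y) ∈ ℓ.set))
  have hcross : (ℓ₁.x, ℓ.y) ∈ ℓ.set ∩ ℓ₁.set :=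
    ⟨Or.inl (LS.mem_hSeg_iff.2 ⟨⟨hx, by linarith [ℓ₁.hxr]⟩, rfl⟩),
      Or.inr (LS.mem_vSeg_iff.2 ⟨rfl, hy.le, ht⟩)⟩
  have hfar : ∀ s ∈ S, (ℓ₂.set ∩ s.set).Nonempty → ℓ₁.r < s.x := by
    intro s hs h₂s
    obtain ⟨hxs, -, hbs⟩ := VSeg.bounds_of_inter_nonempty h₂s
    by_contra! hs₁
    exact htf.not_inter_of_inter hpos hℓ hℓ₁ hs hne ⟨_, hcross⟩
      ⟨_, VSeg.mem_inter_of_crosses_hSeg (by linarith) (by linarith) (by linarith) (by linarith)⟩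
      ⟨_, VSeg.mem_inter_of_crosses_hSeg (by linarith) hs₁ hy₁.le (by linarith)⟩
  obtain ⟨sl, hsl, hsl', hslx⟩ := exists_support_x_eq_leftSupX hsup₂
  obtain ⟨sr, hsr, hsr', hsrx⟩ := exists_support_x_eq_rightSupX hsup₂
  refine hbelow (pBelow_handle hx₂.le ?_ (hslx ▸ hfar sl hsl hsl') hy₁₂)
  exact hr₂ ▸ hsrx ▸ (hfar sr hsr hsr').le

lemma r_le_of_top_lt_y (hsup : ∃ s ∈ S, (ℓ.set ∩ s.set).Nonempty)
    (hr : ℓ.r = rightSupX S ℓ) (hxS : ∀ s ∈ S, ℓ₁.x ≠ s.x)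
    (hleft : ∀ s ∈ S, (ℓ₁.set ∩ s.set).Nonempty → ¬SetLeft ℓ₁.vSeg s.set)
    (hy₁ : 0 ≤ ℓ₁.y) (hx : ℓ₁.x ≤ ℓ.r) (ht : ℓ₁.t < ℓ.y) : ℓ₁.r ≤ ℓ.r := by
  by_contra! hlt
  obtain ⟨s, hs, hs', hsx⟩ := exists_support_x_eq_rightSupX hsup
  rw [← hr] at hsx
  obtain ⟨-, -, hbs⟩ := VSeg.bounds_of_inter_nonempty hs'
  have hb₁ : ℓ₁.t ≤ s.b := by linarith
  refine hleft s hs ⟨_, VSeg.mem_inter_of_crosses_hSeg (hsx ▸ hx) (hsx ▸ hlt.le) hy₁ ?_⟩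
    (VSeg.setLeft_vSeg (lt_of_le_of_ne (hsx ▸ hx) (hxS s hs)) hy₁ hb₁)
  linarith [ℓ₁.hyt]

end Configuration

theorem stmt_15_general (L : Finset LS) (S : Finset VSeg)
    (hpos : ∀ ℓ ∈ L, ∀ p ∈ ℓ.set, 0 < p.2)
    (hxLS : ∀ ℓ ∈ L, ∀ s ∈ S, ℓ.x ≠ s.x)
    (hsup : ∀ ℓ ∈ L, ∃ s ∈ S, (ℓ.set ∩ s.set).Nonempty)
    (htf : TriangleFreeFam L S)
    -- Condition 2: empty hooks, and no two L-shapes in configuration (b) or (c)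
    (h2a : ∀ ℓ ∈ L, ℓ.r = rightSupX S ℓ)
    (h2b : ∀ ℓ₁ ∈ L, ∀ ℓ₂ ∈ L, ℓ₁ ≠ ℓ₂ →
      (ℓ₂.vSeg ∩ ℓ₁.hSeg).Nonempty → ℓ₂.r < ℓ₁.r)
    -- Condition 3: no corner, right endpoint, or top endpoint below a handle
    (h3 : ∀ ℓ ∈ L, ∀ ℓ' ∈ L,
      ¬PBelow (ℓ.x, ℓ.y) (handle S ℓ') ∧ ¬PBelow (ℓ.r, ℓ.y) (handle S ℓ') ∧
        ¬PBelow (ℓ.x, ℓ.t) (handle S ℓ'))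
    -- Condition 5: the vertical segment of an L-shape never lies entirely to the left
    -- of a member of `L ∪ S` intersecting it
    (h5 : ∀ ℓ ∈ L, ∀ m : Set (ℝ × ℝ), InFam L S m → (ℓ.set ∩ m).Nonempty →
      ¬SetLeft ℓ.vSeg m) :
    ∀ ℓ₁ ∈ L, ∀ ℓ₂ ∈ L, ∀ ℓ ∈ L,
      -- configuration (e) or (f)
      ℓ₁.x < ℓ₂.x → ℓ₂.x < ℓ₁.r → ℓ₁.y < ℓ₂.y → ℓ₂.y < ℓ₁.t → ℓ₁.t < ℓ₂.t →
      PBelow (ℓ₁.x, ℓ₁.y) ℓ.hSeg → PBelow (ℓ₂.x, ℓ₂.y) ℓ.hSeg := by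
  intro ℓ₁ hℓ₁ ℓ₂ hℓ₂ ℓ hℓ hx₁₂ hx₂ hy₁₂ hy₂t _ hbelow
  obtain ⟨hx, hxr, hy⟩ := LS.pBelow_hSeg_iff.1 hbelow
  obtain ⟨hr, hy₂⟩ : ℓ₁.r ≤ ℓ.r ∧ ℓ₂.y < ℓ.y := by
    rcases le_or_gt ℓ.y ℓ₁.t with ht | ht
    · have hcross : (ℓ₁.x, ℓ.y) ∈ ℓ₁.vSeg ∩ ℓ.hSeg :=
        ⟨LS.mem_vSeg_iff.2 ⟨rfl, hy.le, ht⟩, LS.mem_hSeg_iff.2 ⟨⟨hx, hxr⟩, rfl⟩⟩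
      have hr := h2b ℓ hℓ ℓ₁ hℓ₁ (ne_of_apply_ne LS.y hy.ne') ⟨_, hcross⟩
      exact ⟨hr.le, y_lt_of_hSeg_crosses_vSeg htf hpos hℓ hℓ₁ (hsup ℓ₂ hℓ₂) (h2a ℓ₂ hℓ₂)
        (h3 ℓ₁ hℓ₁ ℓ₂ hℓ₂).2.1 hx hr hy ht hx₁₂ hx₂ hy₁₂⟩
    · exact ⟨r_le_of_top_lt_y (hsup ℓ hℓ) (h2a ℓ hℓ) (hxLS ℓ₁ hℓ₁)
        (fun s hs => h5 ℓ₁ hℓ₁ s.set (Or.inr ⟨s, hs, rfl⟩))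
        (hpos ℓ₁ hℓ₁ _ ℓ₁.corner_mem_set).le hxr ht, by linarith⟩
  exact LS.pBelow_hSeg_iff.2 ⟨by linarith, by linarith, hy₂⟩

/-- Claim. In the setting of the key lemma, assume additionally
Conditions 1–5 of the reduction. If `ℓ₁, ℓ₂ ∈ L` are in configuration (e) or (f) and the
corner of `ℓ₁` lies below the horizontal segment of `ℓ ∈ L`, then the corner of `ℓ₂`
also lies below the horizontal segment of `ℓ`. -/
theorem stmt_15 (L : Finset LS) (S : Finset VSeg)
    (hpos : ∀ ℓ ∈ L, ∀ p ∈ ℓ.set, 0 < p.2)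
    (hy : ∀ ℓ₁ ∈ L, ∀ ℓ₂ ∈ L, ℓ₁ ≠ ℓ₂ → ℓ₁.y ≠ ℓ₂.y)
    (hxL : ∀ ℓ₁ ∈ L, ∀ ℓ₂ ∈ L, ℓ₁ ≠ ℓ₂ → ℓ₁.x ≠ ℓ₂.x)
    (hxS : ∀ s₁ ∈ S, ∀ s₂ ∈ S, s₁ ≠ s₂ → s₁.x ≠ s₂.x)
    (hxLS : ∀ ℓ ∈ L, ∀ s ∈ S, ℓ.x ≠ s.x)
    (hsup : ∀ ℓ ∈ L, ∃ s ∈ S, (ℓ.set ∩ s.set).Nonempty)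
    (htf : TriangleFreeFam L S)
    -- Condition 1: no two handles of L-shapes in `L` intersect
    (h1 : ∀ ℓ₁ ∈ L, ∀ ℓ₂ ∈ L, ℓ₁ ≠ ℓ₂ → ¬(handle S ℓ₁ ∩ handle S ℓ₂).Nonempty)
    -- Condition 2: empty hooks, and no two L-shapes in configuration (b) or (c)
    (h2a : ∀ ℓ ∈ L, ℓ.r = rightSupX S ℓ)
    (h2b : ∀ ℓ₁ ∈ L, ∀ ℓ₂ ∈ L, ℓ₁ ≠ ℓ₂ →
      (ℓ₂.vSeg ∩ ℓ₁.hSeg).Nonempty → ℓ₂.r < ℓ₁.r)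
    -- Condition 3: no corner, right endpoint, or top endpoint below a handle
    (h3 : ∀ ℓ ∈ L, ∀ ℓ' ∈ L,
      ¬PBelow (ℓ.x, ℓ.y) (handle S ℓ') ∧ ¬PBelow (ℓ.r, ℓ.y) (handle S ℓ') ∧
        ¬PBelow (ℓ.x, ℓ.t) (handle S ℓ'))
    -- Condition 4: no corner to the left of two intersecting members of `L ∪ S`
    (h4 : ∀ ℓ ∈ L, ∀ m₁ m₂ : Set (ℝ × ℝ), InFam L S m₁ → InFam L S m₂ → m₁ ≠ m₂ →
      (m₁ ∩ m₂).Nonempty → ¬(PLeft (ℓ.x, ℓ.y) m₁ ∧ PLeft (ℓ.x, ℓ.y) m₂))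
    -- Condition 5: the vertical segment of an L-shape never lies entirely to the left
    -- of a member of `L ∪ S` intersecting it
    (h5 : ∀ ℓ ∈ L, ∀ m : Set (ℝ × ℝ), InFam L S m → (ℓ.set ∩ m).Nonempty →
      ¬SetLeft ℓ.vSeg m) :
    ∀ ℓ₁ ∈ L, ∀ ℓ₂ ∈ L, ∀ ℓ ∈ L,
      -- configuration (e) or (f)
      ℓ₁.x < ℓ₂.x → ℓ₂.x < ℓ₁.r → ℓ₁.y < ℓ₂.y → ℓ₂.y < ℓ₁.t → ℓ₁.t < ℓ₂.t →
      PBelow (ℓ₁.x, ℓ₁.y) ℓ.hSeg → PBelow (ℓ₂.x, ℓ₂.y) ℓ.hSeg :=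
  stmt_15_general L S hpos hxLS hsup htf h2a h2b h3 h5
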